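/- arXiv:2210.01345 — 4 statements merged into one kernel-verified Lean document; each statement's English description precedes it below -/
import Mathlib

section
/- Let n ≥ 2 be an integer, c > 0 a real number, λ₁,…,λₙ positive real numbers, and f a real number with f > −(1/(2n))·(1/c)^{n−1}. Suppose that ∑_{i=1}^n 1/λᵢ + f/(∏_{i=1}^n λᵢ) = c, and that for some index k ∈ {1,…,n} one has ∑_{i≠k} 1/λᵢ ≤ c. Then in fact ∑_{i≠k} 1/λᵢ < c. -/
/-- Preservation of the cone condition along the continuity path for
the twisted J-equation, in eigenvalue form. -/
theorem stmt_0 (n : ℕ) (hn : 2 ≤ n) (c : ℝ) (hc : 0 < c)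
    (l : Fin n → ℝ) (hl : ∀ i, 0 < l i) (f : ℝ)
    (hf : f > -(1 / (2 * (n : ℝ))) * (1 / c) ^ (n - 1))
    (heq : (∑ i, 1 / l i) + f / (∏ i, l i) = c)
    (k : Fin n) (hk : ∑ i ∈ Finset.univ.erase k, 1 / l i ≤ c) :
    ∑ i ∈ Finset.univ.erase k, 1 / l i < c := by
  set s := Finset.univ.erase k with hs
  set Q := ∏ i ∈ s, l i with hQdef
  have hQ : 0 < Q := Finset.prod_pos (fun i _ => hl i)
  have hcard : s.card = n - 1 := by
    simp [hs, Finset.card_erase_of_mem, Finset.card_univ]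
  -- each term is ≤ c
  have hterm : ∀ i ∈ s, 1 / l i ≤ c := by
    intro i hi
    refine le_trans ?_ hk
    exact Finset.single_le_sum (f := fun j => 1 / l j)
      (fun j _ => le_of_lt (one_div_pos.mpr (hl j))) hi
  -- product bound
  have hprod : Q⁻¹ ≤ c ^ (n - 1) := by
    have h1 : ∏ i ∈ s, (1 / l i) ≤ ∏ _i ∈ s, c :=
      Finset.prod_le_prod (fun i _ => le_of_lt (one_div_pos.mpr (hl i))) hterm
    have h2 : ∏ i ∈ s, (1 / l i) = Q⁻¹ := by
      simp [hQdef, one_div, ← Finset.prod_inv_distrib]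
    rw [h2, Finset.prod_const, hcard] at h1
    exact h1
  -- key: 1 + f / Q > 0
  have hn' : (2 : ℝ) ≤ (n : ℝ) := by exact_mod_cast hn
  have hkey : 0 < 1 + f / Q := by
    rcases le_or_gt 0 f with hfpos | hfneg
    · have : 0 ≤ f / Q := div_nonneg hfpos hQ.le
      linarith
    · have h3 : f * c ^ (n - 1) ≤ f * Q⁻¹ := by
        exact mul_le_mul_of_nonpos_left hprod hfneg.le
      have h4 : -(1 / (2 * (n : ℝ))) * (1 / c) ^ (n - 1) * c ^ (n - 1)
          < f * c ^ (n - 1) := by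
        exact mul_lt_mul_of_pos_right hf (pow_pos hc _)
      have h5 : (1 / c) ^ (n - 1) * c ^ (n - 1) = 1 := by
        rw [← mul_pow, one_div_mul_cancel (ne_of_gt hc), one_pow]
      have h6 : -(1 / (2 * (n : ℝ))) < f * Q⁻¹ := by
        calc -(1 / (2 * (n : ℝ))) = -(1 / (2 * (n : ℝ))) * ((1 / c) ^ (n - 1) * c ^ (n - 1)) := by
              rw [h5, mul_one]
          _ = -(1 / (2 * (n : ℝ))) * (1 / c) ^ (n - 1) * c ^ (n - 1) := by ring
          _ < f * c ^ (n - 1) := h4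
          _ ≤ f * Q⁻¹ := h3
      have h7 : f / Q = f * Q⁻¹ := div_eq_mul_inv f Q
      have h8 : 1 / (2 * (n : ℝ)) ≤ 1 / 4 := by
        apply one_div_le_one_div_of_le <;> linarith
      rw [h7]; linarith
  -- hence Q + f > 0
  have hQf : 0 < Q + f := by
    have := mul_pos hQ hkey
    have hfq : Q * (f / Q) = f := mul_div_cancel₀ f (ne_of_gt hQ)
    nlinarith
  -- rewrite the full sum and product
  have hsum : (∑ i, 1 / l i) = 1 / l k + ∑ i ∈ s, 1 / l i := by
    rw [hs, ← Finset.add_sum_erase _ _ (Finset.mem_univ k)]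
  have hprodfull : (∏ i, l i) = l k * Q := by
    rw [hQdef, hs, ← Finset.mul_prod_erase _ _ (Finset.mem_univ k)]
  rw [hsum, hprodfull] at heq
  have hlk := hl k
  have hpos : 0 < 1 / l k + f / (l k * Q) := by
    have : 1 / l k + f / (l k * Q) = (Q + f) / (l k * Q) := by
      field_simp
    rw [this]
    exact div_pos hQf (mul_pos hlk hQ)
  linarith
end

section
/- For every integer n ≥ 1 and all positive real numbers λ₁,…,λₙ, one has (∑_{i=1}^n 1/λᵢ)^{n−1} ≥ (n−1)! · (∑_{i=1}^n λᵢ)/(∏_{i=1}^n λᵢ). -/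
open Finset Equiv

/-- Restriction of a permutation of `Fin (m+1)` to the successor points is injective. -/
lemma perm_restrict_inj (m : ℕ) :
    Function.Injective (fun (σ : Equiv.Perm (Fin (m+1))) (i : Fin m) => σ i.succ) := by
  intro σ τ h
  have hsucc : ∀ i : Fin m, σ i.succ = τ i.succ := fun i => congrFun h i
  refine Equiv.ext fun z => ?_
  refine Fin.cases ?_ (fun i => hsucc i) z
  -- show σ 0 = τ 0
  have hy : σ 0 = τ (τ.symm (σ 0)) := (τ.apply_symm_apply _).symm
  rcases Fin.eq_zero_or_eq_succ (τ.symm (σ 0)) with h0 | ⟨j, hj⟩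
  · rw [hy, h0]
  · exfalso
    have : σ 0 = σ j.succ := by rw [hy, hj, ← hsucc j]
    exact (Fin.succ_ne_zero j) (σ.injective this).symm

/-- Product over a permuted missing-one-point set. -/
lemma prod_swap_succ (m : ℕ) (x : Fin (m+1) → ℝ) (k : Fin (m+1)) :
    ∏ j : Fin m, x (Equiv.swap 0 k j.succ) = ∏ i ∈ Finset.univ.erase k, x i := by
  apply Finset.prod_nbij (fun j => Equiv.swap 0 k j.succ)
  · intro j _
    rw [Finset.mem_erase]
    refine ⟨fun hk => ?_, Finset.mem_univ _⟩
    have h2 := congrArg (Equiv.swap 0 k) hk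
    rw [Equiv.swap_apply_self, Equiv.swap_apply_right] at h2
    exact Fin.succ_ne_zero j h2
  · intro a _ b _ hab
    exact Fin.succ_injective m ((Equiv.swap 0 k).injective hab)
  · intro y hy
    simp only [Finset.coe_erase, Set.mem_diff, Set.mem_singleton_iff, Finset.coe_univ,
      Set.mem_univ, true_and] at hy
    have hz : Equiv.swap 0 k y ≠ 0 := by
      intro h0
      apply hy
      have h2 := congrArg (Equiv.swap 0 k) h0
      rw [Equiv.swap_apply_self, Equiv.swap_apply_left] at h2
      exact h2
    rcases Fin.eq_zero_or_eq_succ (Equiv.swap 0 k y) with h0 | ⟨j, hj⟩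
    · exact absurd h0 hz
    · refine ⟨j, Finset.mem_coe.mpr (Finset.mem_univ _), ?_⟩
      simp only
      rw [← hj, Equiv.swap_apply_self]
  · intro j _
    rfl

/-- Key combinatorial inequality: the `m`-th power of the sum dominates
`m!` times the sum of square-free degree-`m` monomials missing one variable. -/
lemma key_ineq (m : ℕ) (x : Fin (m+1) → ℝ) (hx : ∀ i, 0 ≤ x i) :
    (Nat.factorial m : ℝ) * ∑ k, ∏ i ∈ Finset.univ.erase k, x i ≤ (∑ i, x i) ^ m := by
  rw [Fintype.sum_pow]
  have himg : ∑ p ∈ Finset.univ.image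
        (fun (σ : Equiv.Perm (Fin (m+1))) (i : Fin m) => σ i.succ), ∏ i, x (p i)
      = ∑ σ : Equiv.Perm (Fin (m+1)), ∏ i : Fin m, x (σ i.succ) :=
    Finset.sum_image (fun a _ b _ h => perm_restrict_inj m h)
  have step1 : ∑ σ : Equiv.Perm (Fin (m+1)), ∏ i : Fin m, x (σ i.succ)
      ≤ ∑ p : Fin m → Fin (m+1), ∏ i, x (p i) := by
    rw [← himg]
    exact Finset.sum_le_sum_of_subset_of_nonneg (Finset.subset_univ _)
      (fun p _ _ => Finset.prod_nonneg fun i _ => hx _)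
  have step2 : ∑ σ : Equiv.Perm (Fin (m+1)), ∏ i : Fin m, x (σ i.succ)
      = (Nat.factorial m : ℝ) * ∑ k, ∏ i ∈ Finset.univ.erase k, x i := by
    rw [← Equiv.sum_comp (Equiv.Perm.decomposeFin (n := m)).symm
      (fun σ => ∏ i : Fin m, x (σ i.succ))]
    rw [Fintype.sum_prod_type]
    have key : ∀ (k : Fin (m+1)) (τ : Equiv.Perm (Fin m)),
        ∏ i : Fin m, x (Equiv.Perm.decomposeFin.symm (k, τ) i.succ)
        = ∏ i ∈ Finset.univ.erase k, x i := by
      intro k τ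
      calc ∏ i : Fin m, x (Equiv.Perm.decomposeFin.symm (k, τ) i.succ)
          = ∏ i : Fin m, x (Equiv.swap 0 k (τ i).succ) :=
            Finset.prod_congr rfl fun i _ => by
              rw [Equiv.Perm.decomposeFin_symm_apply_succ τ k i]
        _ = ∏ j : Fin m, x (Equiv.swap 0 k j.succ) :=
            Equiv.prod_comp τ (fun j => x (Equiv.swap 0 k j.succ))
        _ = ∏ i ∈ Finset.univ.erase k, x i := prod_swap_succ m x k
    calc ∑ k : Fin (m+1), ∑ τ : Equiv.Perm (Fin m),
          ∏ i : Fin m, x (Equiv.Perm.decomposeFin.symm (k, τ) i.succ)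
        = ∑ k : Fin (m+1), ∑ _τ : Equiv.Perm (Fin m),
          ∏ i ∈ Finset.univ.erase k, x i :=
          Finset.sum_congr rfl fun k _ => Finset.sum_congr rfl fun τ _ => key k τ
      _ = ∑ k : Fin (m+1), (Nat.factorial m : ℝ) * ∏ i ∈ Finset.univ.erase k, x i := by
          refine Finset.sum_congr rfl fun k _ => ?_
          rw [Finset.sum_const, Finset.card_univ, Fintype.card_perm, Fintype.card_fin,
            nsmul_eq_mul]
      _ = (Nat.factorial m : ℝ) * ∑ k, ∏ i ∈ Finset.univ.erase k, x i := by
          rw [Finset.mul_sum]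
  rw [← step2]; exact step1

/-- `(∑ 1/λᵢ)^(n-1) ≥ (n-1)! ⋅ (∑ λᵢ)/(∏ λᵢ)` for positive reals. -/
theorem stmt_1 (n : ℕ) (hn : 1 ≤ n) (l : Fin n → ℝ) (hl : ∀ i, 0 < l i) :
    (∑ i, 1 / l i) ^ (n - 1) ≥ (Nat.factorial (n - 1) : ℝ) * (∑ i, l i) / (∏ i, l i) := by
  obtain ⟨m, rfl⟩ : ∃ m, n = m + 1 := ⟨n - 1, (Nat.succ_pred_eq_of_pos hn).symm⟩
  simp only [Nat.add_sub_cancel]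
  set x : Fin (m+1) → ℝ := fun i => 1 / l i with hxdef
  have hprodpos : 0 < ∏ i, l i := Finset.prod_pos fun i _ => hl i
  have hP : (∏ i, l i) ≠ 0 := hprodpos.ne'
  have hprod : ∏ i, x i = 1 / ∏ i, l i := by
    simp [hxdef, one_div, Finset.prod_inv_distrib]
  have herase : ∀ k : Fin (m+1), ∏ i ∈ Finset.univ.erase k, x i = l k / ∏ i, l i := by
    intro k
    have hlk : l k ≠ 0 := (hl k).ne'
    have hxk0 : x k ≠ 0 := by simp [hxdef, hlk]
    have h1 : (∏ i ∈ Finset.univ.erase k, x i) * x k = ∏ i, x i :=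
      Finset.prod_erase_mul _ _ (Finset.mem_univ k)
    have h2 : ∏ i ∈ Finset.univ.erase k, x i = (∏ i, x i) / x k := by
      rw [eq_div_iff hxk0]; exact h1
    have hxk : x k = 1 / l k := rfl
    rw [h2, hprod, hxk]
    field_simp
  have hkey := key_ineq m x (fun i => le_of_lt (show (0:ℝ) < 1 / l i by have := hl i; positivity))
  have hsum : ∑ k, ∏ i ∈ Finset.univ.erase k, x i = (∑ i, l i) / ∏ i, l i := by
    rw [Finset.sum_congr rfl fun k _ => herase k, ← Finset.sum_div]
  rw [hsum] at hkey
  rw [ge_iff_le, mul_div_assoc]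
  exact hkey
end

section
/- Let n ≥ 1 be an integer, F ≥ 0 a real number, and λ₁,…,λₙ positive real numbers with ∏_{i=1}^n λᵢ ≤ e^F. Then (∑_{i=1}^n 1/λᵢ)^{n−1} ≥ (n−1)! · e^{−F} · ∑_{i=1}^n λᵢ. -/
/-!
With `xᵢ = 1/λᵢ`, every squarefree monomial of degree `k` occurs `k!` times in the expansion of
`(∑ xᵢ)^k` and all other terms are nonnegative, so `(∑ xᵢ)^k ≥ k! eₖ(x)`. For `k = n - 1` the
elementary symmetric function is `eₙ₋₁(1/λ) = (∑ λⱼ) / ∏ λᵢ`, and `∏ λᵢ ≤ e^F` finishes.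
-/

open Finset Nat

namespace Multiset

variable {R : Type*}

theorem esymm_cons_succ [CommSemiring R] (a : R) (s : Multiset R) (k : ℕ) :
    (a ::ₘ s).esymm (k + 1) = s.esymm (k + 1) + a * s.esymm k := by
  simp [esymm, map_map, sum_map_mul_left]

theorem factorial_mul_esymm_le_sum_pow [CommSemiring R] [PartialOrder R] [IsOrderedRing R]
    {s : Multiset R} (hs : ∀ x ∈ s, 0 ≤ x) (k : ℕ) : (k ! : R) * s.esymm k ≤ s.sum ^ k := by
  induction s using Multiset.induction_on generalizing k with
  | empty => cases k <;> simp [esymm, powersetCard_zero_right]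
  | cons a s ih =>
    obtain ⟨ha, hs⟩ : 0 ≤ a ∧ ∀ x ∈ s, 0 ≤ x := by simpa using hs
    cases k with
    | zero => simp [esymm]
    | succ k =>
      have hsum : 0 ≤ s.sum := sum_nonneg hs
      calc ((k + 1)! : R) * (a ::ₘ s).esymm (k + 1)
          = (k + 1)! * s.esymm (k + 1) + (k + 1 : ℕ) * a * (k ! * s.esymm k) := by
            rw [esymm_cons_succ, factorial_succ]; push_cast; ring
        _ ≤ s.sum ^ (k + 1) + (k + 1 : ℕ) * s.sum ^ k * a := by
            rw [mul_right_comm _ a]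
            gcongr
            exacts [ih hs _, ih hs _]
        _ ≤ (s.sum + a) ^ (k + 1) :=
            pow_add_mul_le_add_pow_of_sq_nonneg hsum (pow_nonneg ha 2)
              (pow_nonneg (add_nonneg hsum ha) 2) (add_nonneg (mul_nonneg zero_le_two hsum) ha)
              (k + 1)
        _ = (a ::ₘ s).sum ^ (k + 1) := by rw [sum_cons, add_comm]

end Multiset

theorem Finset.sum_powersetCard_card_sub_one {ι M : Type*} [DecidableEq ι] [AddCommMonoid M]
    {s : Finset ι} (hs : s.Nonempty) (g : Finset ι → M) :
    ∑ t ∈ s.powersetCard (#s - 1), g t = ∑ j ∈ s, g (s.erase j) := by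
  symm
  refine sum_bij (fun j _ => s.erase j) (fun j hj => ?_) (fun j hj _ _ => (erase_inj s hj).1)
    (fun t ht => ?_) (fun _ _ => rfl)
  · exact mem_powersetCard.2 ⟨erase_subset j s, card_erase_of_mem hj⟩
  · obtain ⟨hts, hcard⟩ := mem_powersetCard.1 ht
    obtain ⟨j, hj⟩ := card_eq_one.1 (show #(s \ t) = 1 by
      rw [card_sdiff_of_subset hts, hcard]; have := hs.card_pos; omega)
    refine ⟨j, mem_sdiff.1 (hj ▸ mem_singleton_self j) |>.1, ?_⟩
    rw [← sdiff_singleton_eq_erase, ← hj, sdiff_sdiff_eq_self hts]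

theorem Finset.esymm_map_inv_card_sub_one {ι K : Type*} [DecidableEq ι] [Field K]
    {s : Finset ι} (hs : s.Nonempty) {f : ι → K} (hf : ∀ i ∈ s, f i ≠ 0) :
    (s.val.map fun i => (f i)⁻¹).esymm (#s - 1) = (∑ i ∈ s, f i) / ∏ i ∈ s, f i := by
  rw [esymm_map_val, sum_powersetCard_card_sub_one hs, sum_div]
  refine sum_congr rfl fun j hj => ?_
  rw [← mul_prod_erase s f hj, prod_inv_distrib, div_mul_cancel_left₀ (hf j hj)]

theorem stmt_2_general (n : ℕ) (hn : 1 ≤ n) (F : ℝ)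
    (l : Fin n → ℝ) (hl : ∀ i, 0 < l i) (hprod : ∏ i, l i ≤ Real.exp F) :
    (∑ i, 1 / l i) ^ (n - 1) ≥ (Nat.factorial (n - 1) : ℝ) * Real.exp (-F) * (∑ i, l i) := by
  have key := Multiset.factorial_mul_esymm_le_sum_pow (s := univ.val.map fun i => (l i)⁻¹)
    (by simpa using fun i => (hl i).le) (#(univ : Finset (Fin n)) - 1)
  rw [esymm_map_inv_card_sub_one (univ_nonempty_iff.2 ⟨⟨0, hn⟩⟩) fun i _ => (hl i).ne',
    sum_map_val, Finset.card_fin] at key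
  simp_rw [one_div]
  calc (Nat.factorial (n - 1) : ℝ) * Real.exp (-F) * (∑ i, l i)
      = (n - 1)! * ((∑ i, l i) / Real.exp F) := by rw [Real.exp_neg]; ring
    _ ≤ (n - 1)! * ((∑ i, l i) / ∏ i, l i) := by
      gcongr
      exacts [sum_nonneg fun i _ => (hl i).le, prod_pos fun i _ => hl i]
    _ ≤ (∑ i, (l i)⁻¹) ^ (n - 1) := key

/-- if `∏ λᵢ ≤ e^F` then `(∑ 1/λᵢ)^(n-1) ≥ (n-1)! ⋅ e^{-F} ⋅ ∑ λᵢ`. -/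
theorem stmt_2 (n : ℕ) (hn : 1 ≤ n) (F : ℝ) (hF : 0 ≤ F)
    (l : Fin n → ℝ) (hl : ∀ i, 0 < l i) (hprod : ∏ i, l i ≤ Real.exp F) :
    (∑ i, 1 / l i) ^ (n - 1) ≥ (Nat.factorial (n - 1) : ℝ) * Real.exp (-F) * (∑ i, l i) :=
  stmt_2_general n hn F l hl hprod
end

section
/- Let n ≥ 2 be an integer and let c > 0 and ε' > 0 be real numbers. There exists ε > 0, depending only on n, c, and ε', with the following property: whenever λ₁,…,λₙ are positive real numbers satisfying ∑_{i≠k} 1/λᵢ ≤ c − ε' for every k ∈ {1,…,n}, and μ₁,…,μₙ are positive real numbers with μᵢ ≥ λᵢ − ε for every i and ∑_{i=1}^n 1/μᵢ = c, then 1/μₖ ≥ ε'/2, and hence μₖ ≤ 2/ε', for every k ∈ {1,…,n}. -/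
open Finset

/- For `i ≠ k` the single term `1/λᵢ` of the cone sum over `j ≠ k` gives `λᵢ ≥ 1/c`; with
`μᵢ ≥ λᵢ - ε` this yields `1/μᵢ ≤ 1/λᵢ + 2εc²`. Summing over `i ≠ k` and using the cone condition again gives
`∑_{i≠k} 1/μᵢ ≤ c - ε' + 2nεc² ≤ c - ε'/2` once `ε` is small, and the `J`-equation
`∑ 1/μᵢ = c` leaves `1/μₖ ≥ ε'/2`. -/

theorem one_div_le_one_div_add_of_sub_le {l μ ε c : ℝ} (hl : 0 < l) (hlc : 1 / l ≤ c)
    (hε : 0 ≤ ε) (hεc : 2 * ε * c ≤ 1) (hμ : l - ε ≤ μ) :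
    1 / μ ≤ 1 / l + 2 * ε * c ^ 2 := by
  have hcl : 1 ≤ l * c := by rwa [div_le_iff₀ hl, mul_comm] at hlc
  have h2ε : 2 * ε ≤ l := by nlinarith
  have hsub : 0 < l - ε := by linarith
  calc 1 / μ ≤ 1 / (l - ε) := one_div_le_one_div_of_le hsub hμ
    _ = 1 / l + ε / (l * (l - ε)) := by field_simp; ring
    _ ≤ 1 / l + 2 * ε * c ^ 2 := by
      gcongr
      rw [div_le_iff₀ (by positivity)]
      nlinarith [mul_le_mul_of_nonneg_left (mul_le_mul hcl hcl zero_le_one (by positivity)) hε]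

theorem sum_one_div_le_sum_one_div_add {ι : Type*} (s : Finset ι) {l μ : ι → ℝ} {ε c : ℝ}
    (hl : ∀ i ∈ s, 0 < l i) (hlc : ∀ i ∈ s, 1 / l i ≤ c) (hε : 0 ≤ ε) (hεc : 2 * ε * c ≤ 1)
    (hμ : ∀ i ∈ s, l i - ε ≤ μ i) :
    ∑ i ∈ s, 1 / μ i ≤ ∑ i ∈ s, 1 / l i + #s * (2 * ε * c ^ 2) := by
  calc ∑ i ∈ s, 1 / μ i ≤ ∑ i ∈ s, (1 / l i + 2 * ε * c ^ 2) :=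
        sum_le_sum fun i hi =>
          one_div_le_one_div_add_of_sub_le (hl i hi) (hlc i hi) hε hεc (hμ i hi)
    _ = ∑ i ∈ s, 1 / l i + #s * (2 * ε * c ^ 2) := by
      rw [sum_add_distrib, sum_const, nsmul_eq_mul]

theorem stmt_4_general (n : ℕ) (c ε' : ℝ) (hc : 0 < c) (hε' : 0 < ε') :
    ∃ ε : ℝ, 0 < ε ∧
      ∀ (l μ : Fin n → ℝ), (∀ i, 0 < l i) → (∀ i, 0 < μ i) →
        (∀ k, ∑ i ∈ Finset.univ.erase k, 1 / l i ≤ c - ε') →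
        (∀ i, μ i ≥ l i - ε) →
        (∑ i, 1 / μ i) = c →
        ∀ k, 1 / μ k ≥ ε' / 2 ∧ μ k ≤ 2 / ε' := by
  set ε := min (1 / (2 * c)) (ε' / (4 * (n + 1) * c ^ 2))
  refine ⟨ε, by positivity, fun l μ hl _ hcone hle hsum k => ?_⟩
  have hεc : 2 * ε * c ≤ 1 := by
    have : ε * (2 * c) ≤ 1 := (le_div_iff₀ (by positivity)).mp (min_le_left _ _)
    linarith
  have hεε' : ε * (4 * (n + 1) * c ^ 2) ≤ ε' :=
    (le_div_iff₀ (by positivity)).mp (min_le_right _ _)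
  have hlc : ∀ i ∈ univ.erase k, 1 / l i ≤ c := fun i hi =>
    calc 1 / l i ≤ ∑ j ∈ univ.erase k, 1 / l j :=
          single_le_sum (fun j _ => (one_div_pos.mpr (hl j)).le) hi
      _ ≤ c := by linarith [hcone k]
  have hcard : (#(univ.erase k) : ℝ) ≤ n + 1 := by
    have : #(univ.erase k) ≤ n := card_erase_le.trans_eq (card_fin n)
    exact_mod_cast this.trans n.le_succ
  have hrest := sum_one_div_le_sum_one_div_add (univ.erase k) (fun i _ => hl i) hlc
    (by positivity) hεc (fun i _ => hle i)
  have hsmall : (#(univ.erase k) : ℝ) * (2 * ε * c ^ 2) ≤ ε' / 2 := by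
    nlinarith [mul_le_mul_of_nonneg_right hcard (by positivity : 0 ≤ 2 * ε * c ^ 2)]
  have hk : ε' / 2 ≤ 1 / μ k := by
    rw [← add_sum_erase univ _ (mem_univ k)] at hsum
    linarith [hcone k]
  refine ⟨hk, ?_⟩
  rw [show 2 / ε' = 1 / (ε' / 2) by ring, ← one_div_one_div (μ k)]
  exact one_div_le_one_div_of_le (by positivity) hk

/-- eigenvalue bound in the ABP `C⁰` estimate of Székelyhidi and
Datar–Pingali, diagonal special case. -/
theorem stmt_4 (n : ℕ) (hn : 2 ≤ n) (c ε' : ℝ) (hc : 0 < c) (hε' : 0 < ε') :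
    ∃ ε : ℝ, 0 < ε ∧
      ∀ (l μ : Fin n → ℝ), (∀ i, 0 < l i) → (∀ i, 0 < μ i) →
        (∀ k, ∑ i ∈ Finset.univ.erase k, 1 / l i ≤ c - ε') →
        (∀ i, μ i ≥ l i - ε) →
        (∑ i, 1 / μ i) = c →
        ∀ k, 1 / μ k ≥ ε' / 2 ∧ μ k ≤ 2 / ε' :=
  stmt_4_general n c ε' hc hε'
end
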